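/- arXiv:2210.16122 — 7 statements merged into one kernel-verified Lean document; each statement's English description precedes it below -/
import Mathlib

section
/- Let c₁, c₃, ρ₀ > 0 and c₂, c₄ ∈ ℝ, and let θ ∈ ℝ. Consider the 2×2 real matrix B₁ = [[c₁ cos θ, −c₁ ρ₀ sin θ], [−(c₃/ρ₀) sin θ, (c₂ − 2c₄) cos θ]]. Then the discriminant Δ = (c₁ − (c₂ − 2c₄))² cos²θ + 4 c₁ c₃ sin²θ is nonnegative, and the characteristic polynomial of B₁ factors over ℝ as (X − λ₊)(X − λ₋), where λ± = (1/2)[(c₁ + c₂ − 2c₄) cos θ ± √Δ]. In particular both eigenvalues of B₁ are real. -/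
open Polynomial

/-- The first 2×2 diagonal block of the Fourier symbol of the linearized SOHB system has a
nonnegative discriminant and its characteristic polynomial splits over ℝ with the explicit
real eigenvalues `λ₊` and `λ₋`; in particular both eigenvalues of the block are real. -/
theorem sohb_block1_charpoly_splits
    (c₁ c₂ c₃ c₄ ρ₀ θ : ℝ) (hc₁ : 0 < c₁) (hc₃ : 0 < c₃) (hρ₀ : 0 < ρ₀) :
    let Δ : ℝ := (c₁ - (c₂ - 2 * c₄)) ^ 2 * Real.cos θ ^ 2 + 4 * c₁ * c₃ * Real.sin θ ^ 2
    let lp : ℝ := (1 / 2) * ((c₁ + c₂ - 2 * c₄) * Real.cos θ + Real.sqrt Δ)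
    let lm : ℝ := (1 / 2) * ((c₁ + c₂ - 2 * c₄) * Real.cos θ - Real.sqrt Δ)
    let B₁ : Matrix (Fin 2) (Fin 2) ℝ :=
      !![c₁ * Real.cos θ, -(c₁ * ρ₀ * Real.sin θ);
         -((c₃ / ρ₀) * Real.sin θ), (c₂ - 2 * c₄) * Real.cos θ]
    0 ≤ Δ ∧ B₁.charpoly = (X - C lp) * (X - C lm) := by
  intro Δ lp lm B₁
  have hΔ : 0 ≤ Δ := by positivity
  have hs : Real.sqrt Δ ^ 2 =
      (c₁ - (c₂ - 2 * c₄)) ^ 2 * Real.cos θ ^ 2 + 4 * c₁ * c₃ * Real.sin θ ^ 2 :=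
    Real.sq_sqrt hΔ
  refine ⟨hΔ, ?_⟩
  have expand : ∀ a b : ℝ, (X - C a) * (X - C b) =
      X ^ 2 - C (a + b) * X + C (a * b) := by
    intro a b
    simp only [C_add, C_mul]
    ring
  have htr : c₁ * Real.cos θ + (c₂ - 2 * c₄) * Real.cos θ = lp + lm := by
    simp only [lp, lm]; ring
  have hdet : c₁ * Real.cos θ * ((c₂ - 2 * c₄) * Real.cos θ) -
      -(c₁ * ρ₀ * Real.sin θ) * -((c₃ / ρ₀) * Real.sin θ) = lp * lm := by
    simp only [lp, lm]
    field_simp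
    nlinarith [hs, hρ₀.ne', sq_nonneg (Real.sqrt Δ)]
  rw [Matrix.charpoly, Matrix.det_fin_two]
  simp only [B₁, Matrix.charmatrix_apply_eq, Matrix.charmatrix_apply_ne,
    Matrix.cons_val', Matrix.cons_val_zero, Matrix.cons_val_one, Matrix.head_cons,
    Matrix.empty_val', Matrix.cons_val_fin_one, Matrix.head_fin_const, ne_eq,
    Fin.zero_eq_one_iff, Fin.one_eq_zero_iff, Nat.succ_ne_self, not_false_eq_true,
    Matrix.of_apply]
  rw [expand, expand, ← htr, ← hdet]
  simp only [C_sub, C_mul, C_neg]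
  ring
end

section
/- Let c₂, c₄ ∈ ℝ and θ ∈ ℝ. Consider the symmetric 2×2 real matrix B₂ = [[(c₂ − 2c₄) cos θ, −c₄ sin θ], [−c₄ sin θ, c₂ cos θ]]. Then the characteristic polynomial of B₂ factors over ℝ as (X − μ₊)(X − μ₋), where μ± = (c₂ − c₄) cos θ ± c₄. In particular both eigenvalues of B₂ are real, and they are distinct as soon as c₄ ≠ 0. -/
open Polynomial

/-- The 2×2 diagonal block (acting on `(Â₁ₖ, Â₂ₖ)`) of the Fourier symbol of the linearized SOHB
system has characteristic polynomial splitting over ℝ with real eigenvalues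
`μ± = (c₂ - c₄) cos θ ± c₄`, which are distinct as soon as `c₄ ≠ 0`. -/
theorem sohb_block2_charpoly_splits (c₂ c₄ θ : ℝ) :
    let mp : ℝ := (c₂ - c₄) * Real.cos θ + c₄
    let mm : ℝ := (c₂ - c₄) * Real.cos θ - c₄
    let B₂ : Matrix (Fin 2) (Fin 2) ℝ :=
      !![(c₂ - 2 * c₄) * Real.cos θ, -(c₄ * Real.sin θ);
         -(c₄ * Real.sin θ), c₂ * Real.cos θ]
    B₂.charpoly = (X - C mp) * (X - C mm) ∧ (c₄ ≠ 0 → mp ≠ mm) := by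
  intro mp mm B₂
  constructor
  · have hs : Real.sin θ ^ 2 + Real.cos θ ^ 2 = 1 := Real.sin_sq_add_cos_sq θ
    rw [Matrix.charpoly, Matrix.det_fin_two]
    simp only [Matrix.charmatrix_apply, Matrix.one_apply, Matrix.map_apply,
      Matrix.cons_val', Matrix.cons_val_zero, Matrix.cons_val_one, Matrix.head_cons,
      Matrix.head_fin_const, Matrix.empty_val', Matrix.cons_val_fin_one,
      Matrix.smul_apply, smul_eq_mul, B₂, mp, mm]
    norm_num
    have : (Real.sin θ : ℝ) ^ 2 = 1 - Real.cos θ ^ 2 := by linarith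
    simp only [map_sub, map_add, map_mul, map_ofNat, map_one]
    ring_nf
    rw [show (C (Real.sin θ) ^ 2 : ℝ[X]) = 1 - C (Real.cos θ ^ 2) by
      rw [← C_pow, this]; simp]
    rw [map_pow]
    ring
  · intro h hc
    have : (c₂ - c₄) * Real.cos θ + c₄ = (c₂ - c₄) * Real.cos θ - c₄ := hc
    apply h; linarith
end

section
/- Let n ≥ 1 and let M₀ be an invertible real n×n matrix. Let S₀ be the unique symmetric positive definite square root of M₀M₀ᵀ and set Θ₀ = S₀⁻¹ M₀ (the orthogonal factor in the polar decomposition of M₀). For each α > 0, let M_α : [0, ∞) → M_n(ℝ) be a differentiable function satisfying M_α(0) = M₀ and, for every t ≥ 0, M_α′(t) = −(1/α)(M_α(t) M_α(t)ᵀ − I) M_α(t). Then Θ₀ is orthogonal (Θ₀Θ₀ᵀ = I), and for every fixed t > 0, M_α(t) converges to Θ₀ as α → 0⁺. -/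
attribute [local instance] Matrix.frobeniusNormedAddCommGroup Matrix.frobeniusNormedSpace

open Filter Topology Matrix

set_option maxHeartbeats 1000000
set_option synthInstance.maxHeartbeats 200000

private lemma relax_scalar_deriv (α q : ℝ) (hα : 0 < α) (hq : 0 < q) (t : ℝ) (ht : 0 ≤ t) :
    HasDerivAt (fun u => (Real.sqrt (q + Real.exp (-(2/α) * u) * (1 - q)))⁻¹)
      (-(1/α) * ((((Real.sqrt (q + Real.exp (-(2/α) * t) * (1 - q)))⁻¹)^2 * q - 1) *
        (Real.sqrt (q + Real.exp (-(2/α) * t) * (1 - q)))⁻¹)) t := by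
  set e : ℝ := Real.exp (-(2/α) * t) with he
  have he1 : e ≤ 1 := by
    rw [he]
    rw [show (1:ℝ) = Real.exp 0 by simp]; apply Real.exp_le_exp.2
    have : 0 ≤ (2/α) * t := by positivity
    linarith
  have he0 : 0 < e := Real.exp_pos _
  have hh : 0 < q + e * (1 - q) := by nlinarith
  have hinner : HasDerivAt (fun u => q + Real.exp (-(2/α) * u) * (1 - q))
      (Real.exp (-(2/α) * t) * (-(2/α)) * (1 - q)) t := by
    have h1 : HasDerivAt (fun u : ℝ => -(2/α) * u) (-(2/α)) t := by
      simpa using (hasDerivAt_id t).const_mul (-(2/α))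
    exact ((h1.exp).mul_const (1 - q)).const_add q
  have hs : HasDerivAt (fun u => Real.sqrt (q + Real.exp (-(2/α) * u) * (1 - q)))
      ((Real.exp (-(2/α) * t) * (-(2/α)) * (1 - q)) / (2 * Real.sqrt (q + e * (1 - q)))) t :=
    hinner.sqrt (ne_of_gt hh)
  have hsq : 0 < Real.sqrt (q + e * (1 - q)) := Real.sqrt_pos.2 hh
  have := hs.inv (ne_of_gt hsq)
  refine this.congr_deriv ?_
  symm
  have h2 : Real.sqrt (q + e * (1 - q)) ^ 2 = q + e * (1 - q) := Real.sq_sqrt hh.le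
  rw [← he]
  field_simp
  nlinarith [hsq, h2, Real.exp_pos (-(2/α) * t)]

/-- Relaxation limit of the homogeneous ODE `M' = -(1/α)(MMᵀ - I)M`: if `M₀` is invertible with
polar decomposition `M₀ = S₀ Θ₀` (`S₀` the symmetric positive definite square root of `M₀M₀ᵀ`,
`Θ₀ = S₀⁻¹M₀`), then `Θ₀` is orthogonal and, for every fixed `t > 0`, the solution `M_α(t)`
converges to `Θ₀` as `α → 0⁺`. -/
theorem relaxation_ode_limit_polar_factor
    {n : ℕ} (hn : 1 ≤ n) (M₀ S₀ Θ₀ : Matrix (Fin n) (Fin n) ℝ)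
    (hM₀ : IsUnit M₀.det)
    (hS₀ : S₀.PosDef) (hS₀sq : S₀ * S₀ = M₀ * M₀ᵀ)
    (hΘ₀ : Θ₀ = S₀⁻¹ * M₀)
    (M : ℝ → ℝ → Matrix (Fin n) (Fin n) ℝ)
    (hinit : ∀ α > (0 : ℝ), M α 0 = M₀)
    (hdiff : ∀ α > (0 : ℝ), ∀ t ∈ Set.Ici (0 : ℝ),
      HasDerivWithinAt (M α)
        (-(1 / α) • ((M α t * (M α t)ᵀ - 1) * M α t)) (Set.Ici (0 : ℝ)) t) :
    Θ₀ * Θ₀ᵀ = 1 ∧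
      ∀ t > (0 : ℝ), Tendsto (fun α => M α t) (𝓝[>] (0 : ℝ)) (𝓝 Θ₀) := by
  have hstar : ∀ A : Matrix (Fin n) (Fin n) ℝ, star A = Aᵀ := by
    intro A; ext i j; simp [Matrix.star_apply]
  have hdetS : IsUnit S₀.det := hS₀.det_pos.ne'.isUnit
  have hSymm : S₀ᵀ = S₀ := by
    have := hS₀.1
    rwa [Matrix.IsHermitian, ← Matrix.star_eq_conjTranspose, hstar] at this
  have horth : Θ₀ * Θ₀ᵀ = 1 := by
    rw [hΘ₀, Matrix.transpose_mul, Matrix.transpose_nonsing_inv, hSymm]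
    calc S₀⁻¹ * M₀ * (M₀ᵀ * S₀⁻¹) = S₀⁻¹ * (M₀ * M₀ᵀ) * S₀⁻¹ := by
          simp only [Matrix.mul_assoc]
      _ = S₀⁻¹ * (S₀ * S₀) * S₀⁻¹ := by rw [hS₀sq]
      _ = (S₀⁻¹ * S₀) * (S₀ * S₀⁻¹) := by simp only [Matrix.mul_assoc]
      _ = 1 := by rw [Matrix.nonsing_inv_mul _ hdetS, Matrix.mul_nonsing_inv _ hdetS,
            Matrix.one_mul]
  refine ⟨horth, ?_⟩
  -- spectral decomposition of S₀
  have hH : S₀.IsHermitian := hS₀.1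
  set U : Matrix (Fin n) (Fin n) ℝ := (hH.eigenvectorUnitary : Matrix (Fin n) (Fin n) ℝ)
    with hUdef
  set s : Fin n → ℝ := hH.eigenvalues with hsdef
  have hU1 : Uᵀ * U = 1 := by
    rw [← hstar U]; exact (Matrix.mem_unitaryGroup_iff'.mp hH.eigenvectorUnitary.2)
  have hU2 : U * Uᵀ = 1 := by
    rw [← hstar U]; exact (Matrix.mem_unitaryGroup_iff.mp hH.eigenvectorUnitary.2)
  have hspec : S₀ = U * diagonal s * Uᵀ := by
    have := hH.spectral_theorem
    rw [Unitary.conjStarAlgAut_apply, hstar U] at this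
    simpa using this
  have hs : ∀ i, 0 < s i := hS₀.eigenvalues_pos
  set q : Fin n → ℝ := fun i => s i * s i with hqdef
  have hq : ∀ i, 0 < q i := fun i => mul_pos (hs i) (hs i)
  set E : Matrix (Fin n) (Fin n) ℝ → Matrix (Fin n) (Fin n) ℝ := fun X => U * X * Uᵀ with hEdef
  have hcancel : ∀ Z : Matrix (Fin n) (Fin n) ℝ, Uᵀ * (U * Z) = Z := by
    intro Z; rw [← Matrix.mul_assoc, hU1, Matrix.one_mul]
  have hE_mul : ∀ X Y, E X * E Y = E (X * Y) := by
    intro X Y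
    show U * X * Uᵀ * (U * Y * Uᵀ) = U * (X * Y) * Uᵀ
    simp only [Matrix.mul_assoc, hcancel]
  have hE_one : E 1 = 1 := by show U * 1 * Uᵀ = 1; rw [Matrix.mul_one, hU2]
  have hE_sub : ∀ X Y, E X - E Y = E (X - Y) := by
    intro X Y; show U * X * Uᵀ - U * Y * Uᵀ = U * (X - Y) * Uᵀ
    noncomm_ring
  have hA : M₀ * M₀ᵀ = U * diagonal q * Uᵀ := by
    rw [← hS₀sq, hspec]
    calc U * diagonal s * Uᵀ * (U * diagonal s * Uᵀ)
        = U * (diagonal s * diagonal s) * Uᵀ := hE_mul _ _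
      _ = U * diagonal q * Uᵀ := by rw [diagonal_mul_diagonal]
  set L : (Fin n → ℝ) →ₗ[ℝ] Matrix (Fin n) (Fin n) ℝ :=
    { toFun := fun v => U * diagonal v * Uᵀ * M₀,
      map_add' := by
        intro v w
        show U * diagonal (fun i => v i + w i) * Uᵀ * M₀ = _
        rw [← diagonal_add]
        noncomm_ring
      map_smul' := by
        intro c v
        show U * diagonal (fun i => c * v i) * Uᵀ * M₀ = _
        rw [show (fun i => c * v i) = c • v from rfl, diagonal_smul]
        simp [Matrix.smul_mul] } with hLdef
  set Lc : (Fin n → ℝ) →L[ℝ] Matrix (Fin n) (Fin n) ℝ := L.toContinuousLinearMap with hLcdef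
  have hLc : ∀ v, Lc v = E (diagonal v) * M₀ := fun v => rfl
  have key : ∀ v : Fin n → ℝ,
      (Lc v * (Lc v)ᵀ - 1) * Lc v = Lc (fun i => (v i ^ 2 * q i - 1) * v i) := by
    intro v
    have hT : (E (diagonal v))ᵀ = E (diagonal v) := by
      show (U * diagonal v * Uᵀ)ᵀ = U * diagonal v * Uᵀ
      simp [Matrix.transpose_mul, diagonal_transpose, Matrix.mul_assoc]
    have h1 : Lc v * (Lc v)ᵀ = E (diagonal v * diagonal q * diagonal v) := by
      rw [hLc, Matrix.transpose_mul, hT]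
      calc E (diagonal v) * M₀ * (M₀ᵀ * E (diagonal v))
          = E (diagonal v) * (M₀ * M₀ᵀ) * E (diagonal v) := by
            simp only [Matrix.mul_assoc]
        _ = E (diagonal v) * E (diagonal q) * E (diagonal v) := by rw [hA]
        _ = E (diagonal v * diagonal q * diagonal v) := by rw [hE_mul, hE_mul]
    have harg : (diagonal v * diagonal q * diagonal v - 1 : Matrix (Fin n) (Fin n) ℝ)
        * diagonal v = diagonal (fun i => (v i ^ 2 * q i - 1) * v i) := by
      rw [diagonal_mul_diagonal, diagonal_mul_diagonal, ← diagonal_one, diagonal_sub,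
        diagonal_mul_diagonal]
      exact congrArg diagonal (funext fun i => by ring)
    rw [h1, hLc, hLc, ← hE_one, hE_sub, ← Matrix.mul_assoc, hE_mul, harg]
  -- the explicit solution
  set g : ℝ → Fin n → ℝ := fun c i => (Real.sqrt (q i + c * (1 - q i)))⁻¹ with hgdef
  set N : ℝ → ℝ → Matrix (Fin n) (Fin n) ℝ :=
    fun α t => Lc (g (Real.exp (-(2/α) * t))) with hNdef
  -- N satisfies the ODE
  have hNderiv : ∀ α > (0:ℝ), ∀ t ∈ Set.Ici (0:ℝ),
      HasDerivAt (N α) (-(1 / α) • ((N α t * (N α t)ᵀ - 1) * N α t)) t := by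
    intro α hα t ht
    set c : ℝ := Real.exp (-(2/α) * t) with hc
    have hvec : HasDerivAt (fun u => g (Real.exp (-(2/α) * u)))
        (fun i => -(1/α) * (((g c i)^2 * q i - 1) * g c i)) t := by
      apply hasDerivAt_pi.2
      intro i
      exact relax_scalar_deriv α (q i) hα (hq i) t ht
    have := Lc.hasFDerivAt.comp_hasDerivAt t hvec
    have heqd : Lc (fun i => -(1/α) * (((g c i)^2 * q i - 1) * g c i))
        = -(1 / α) • ((N α t * (N α t)ᵀ - 1) * N α t) := by
      have h0 : (fun i => -(1/α) * (((g c i)^2 * q i - 1) * g c i))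
          = (-(1/α)) • ((fun i => ((g c i)^2 * q i - 1) * g c i) : Fin n → ℝ) := rfl
      rw [h0, Lc.map_smul, ← key (g c)]
    rw [← heqd]
    exact this
  -- uniqueness: M α T = N α T for T > 0
  have hN0 : ∀ α > (0:ℝ), N α 0 = M₀ := by
    intro α hα
    have : g (Real.exp (-(2/α) * 0)) = fun _ => 1 := by
      funext i
      simp only [mul_zero, Real.exp_zero, hgdef]
      rw [show (q i + 1 * (1 - q i)) = 1 by ring, Real.sqrt_one, inv_one]
    rw [hNdef]
    simp only [this]
    rw [hLc, show (diagonal (fun _ : Fin n => (1:ℝ))) = 1 from diagonal_one, hEdef]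
    simp [hU2]
  have huniq : ∀ α > (0:ℝ), ∀ T > (0:ℝ), M α T = N α T := by
    intro α hα T hT
    have contM : ContinuousOn (M α) (Set.Icc 0 T) := fun u hu =>
      ((hdiff α hα u (Set.mem_Ici.2 hu.1)).continuousWithinAt).mono Set.Icc_subset_Ici_self
    have contN : ContinuousOn (N α) (Set.Icc 0 T) := fun u hu =>
      ((hNderiv α hα u (Set.mem_Ici.2 hu.1)).continuousAt.continuousWithinAt)
    obtain ⟨R₁, hR₁⟩ := (isCompact_Icc).exists_bound_of_continuousOn contM
    obtain ⟨R₂, hR₂⟩ := (isCompact_Icc).exists_bound_of_continuousOn contN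
    set R : ℝ := max (max R₁ R₂) 0 with hRdef
    have hR0 : 0 ≤ R := le_max_right _ _
    set v : ℝ → Matrix (Fin n) (Fin n) ℝ → Matrix (Fin n) (Fin n) ℝ :=
      fun _ x => -(1 / α) • ((x * xᵀ - 1) * x) with hvdef
    set C : ℝ := (1/α) * (3 * R^2 + 1) with hCdef
    have hlip : ∀ u : ℝ, LipschitzOnWith (Real.toNNReal C) (v u) (Metric.closedBall 0 R) := by
      intro u
      apply LipschitzOnWith.of_dist_le'
      intro x hx y hy
      rw [Metric.mem_closedBall, dist_zero_right] at hx hy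
      rw [dist_eq_norm, dist_eq_norm]
      have hid : (x * xᵀ - 1) * x - (y * yᵀ - 1) * y
          = (x - y) * (xᵀ * x) + y * ((x - y)ᵀ * x) + (y * yᵀ) * (x - y) - (x - y) := by
        rw [transpose_sub]; noncomm_ring
      have hvsub : v u x - v u y = -(1/α) • ((x - y) * (xᵀ * x) + y * ((x - y)ᵀ * x)
          + (y * yᵀ) * (x - y) - (x - y)) := by
        rw [hvdef]; dsimp only; rw [← smul_sub, hid]
      have hb1 : ‖(x - y) * (xᵀ * x)‖ ≤ ‖x - y‖ * (R * R) := by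
        refine le_trans (frobenius_norm_mul _ _) ?_
        refine mul_le_mul_of_nonneg_left ?_ (norm_nonneg _)
        refine le_trans (frobenius_norm_mul _ _) ?_
        rw [frobenius_norm_transpose]
        exact mul_le_mul hx hx (norm_nonneg _) hR0
      have hb2 : ‖y * ((x - y)ᵀ * x)‖ ≤ R * (‖x - y‖ * R) := by
        refine le_trans (frobenius_norm_mul _ _) ?_
        refine mul_le_mul hy ?_ (norm_nonneg _) hR0
        refine le_trans (frobenius_norm_mul _ _) ?_
        rw [frobenius_norm_transpose]
        exact mul_le_mul_of_nonneg_left hx (norm_nonneg _)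
      have hb3 : ‖(y * yᵀ) * (x - y)‖ ≤ R * R * ‖x - y‖ := by
        refine le_trans (frobenius_norm_mul _ _) ?_
        refine mul_le_mul ?_ le_rfl (norm_nonneg _) (by positivity)
        refine le_trans (frobenius_norm_mul _ _) ?_
        rw [frobenius_norm_transpose]
        exact mul_le_mul hy hy (norm_nonneg _) hR0
      have htri : ‖(x - y) * (xᵀ * x) + y * ((x - y)ᵀ * x) + (y * yᵀ) * (x - y) - (x - y)‖
          ≤ ‖(x - y) * (xᵀ * x)‖ + ‖y * ((x - y)ᵀ * x)‖ + ‖(y * yᵀ) * (x - y)‖ + ‖x - y‖ := by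
        refine le_trans (norm_sub_le _ _) ?_
        have := le_trans (norm_add_le ((x - y) * (xᵀ * x) + y * ((x - y)ᵀ * x)) ((y * yᵀ) * (x - y)))
          (add_le_add_left (norm_add_le _ _) _)
        linarith
      rw [hvsub, norm_smul]
      have habs : ‖-(1/α)‖ = 1/α := by
        rw [Real.norm_eq_abs, abs_neg, abs_of_pos (by positivity)]
      rw [habs, hCdef]
      have : ‖(x - y) * (xᵀ * x) + y * ((x - y)ᵀ * x) + (y * yᵀ) * (x - y) - (x - y)‖
          ≤ (3 * R^2 + 1) * ‖x - y‖ := by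
        nlinarith [htri, hb1, hb2, hb3, norm_nonneg (x - y)]
      calc 1/α * ‖(x - y) * (xᵀ * x) + y * ((x - y)ᵀ * x) + (y * yᵀ) * (x - y) - (x - y)‖
          ≤ 1/α * ((3 * R^2 + 1) * ‖x - y‖) := by
            apply mul_le_mul_of_nonneg_left this (by positivity)
        _ = (1/α) * (3 * R^2 + 1) * ‖x - y‖ := by ring
    have heqon : Set.EqOn (M α) (N α) (Set.Icc 0 T) := by
      apply ODE_solution_unique_of_mem_Icc_right (fun u _ => hlip u) contM ?_ ?_ contN ?_ ?_ ?_
      · intro u hu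
        exact (hdiff α hα u (Set.mem_Ici.2 hu.1)).mono (Set.Ici_subset_Ici.2 hu.1)
      · intro u hu
        rw [Metric.mem_closedBall, dist_zero_right]
        exact le_trans (hR₁ u (Set.Ico_subset_Icc_self hu)) (le_trans (le_max_left _ _)
          (le_max_left _ _))
      · intro u hu
        exact ((hNderiv α hα u (Set.mem_Ici.2 hu.1)).hasDerivWithinAt)
      · intro u hu
        rw [Metric.mem_closedBall, dist_zero_right]
        exact le_trans (hR₂ u (Set.Ico_subset_Icc_self hu)) (le_trans (le_max_right _ _)
          (le_max_left _ _))
      · rw [hinit α hα, hN0 α hα]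
    exact heqon (Set.right_mem_Icc.2 hT.le)
  -- the limit
  intro t ht
  have hdin : S₀⁻¹ = U * diagonal (fun i => (s i)⁻¹) * Uᵀ := by
    apply Matrix.inv_eq_left_inv
    rw [hspec]
    calc U * diagonal (fun i => (s i)⁻¹) * Uᵀ * (U * diagonal s * Uᵀ)
        = U * (diagonal (fun i => (s i)⁻¹) * diagonal s) * Uᵀ := hE_mul _ _
      _ = 1 := by
          rw [diagonal_mul_diagonal,
            show (fun i => (s i)⁻¹ * s i) = fun _ : Fin n => (1:ℝ) from
              funext fun i => inv_mul_cancel₀ (hs i).ne', diagonal_one, Matrix.mul_one, hU2]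
  have hg0 : g 0 = fun i => (s i)⁻¹ := by
    funext i
    rw [hgdef]
    simp only [zero_mul, add_zero]
    rw [hqdef]
    simp only []
    rw [Real.sqrt_mul_self (hs i).le]
  have hLcg0 : Lc (g 0) = Θ₀ := by
    rw [hg0, hLc, hΘ₀, hdin, hEdef]
  have h1 : Tendsto (fun α : ℝ => Real.exp (-(2/α) * t)) (𝓝[>] (0:ℝ)) (𝓝 0) := by
    apply Real.tendsto_exp_atBot.comp
    rw [show (fun α : ℝ => -(2/α) * t) = fun α : ℝ => -((2*t) * α⁻¹) from
      funext fun α => by ring]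
    exact tendsto_neg_atTop_atBot.comp (tendsto_inv_nhdsGT_zero.const_mul_atTop (by positivity))
  have h2 : ContinuousAt (fun c : ℝ => Lc (g c)) 0 := by
    apply (Lc.continuous.continuousAt).comp
    apply continuousAt_pi.2
    intro i
    have hb : ContinuousAt (fun c : ℝ => Real.sqrt (q i + c * (1 - q i))) 0 :=
      (Real.continuous_sqrt.continuousAt).comp (by fun_prop)
    apply hb.inv₀
    simp only [zero_mul, add_zero]
    exact (Real.sqrt_pos.2 (hq i)).ne'
  have hNlim : Tendsto (fun α => N α t) (𝓝[>] (0:ℝ)) (𝓝 Θ₀) := by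
    rw [← hLcg0]
    exact (h2.tendsto).comp h1
  apply hNlim.congr'
  filter_upwards [self_mem_nhdsWithin] with α hα
  exact (huniq α hα t ht).symm
end

section
/- Let n ≥ 1 and let Q₀ be a symmetric positive definite real n×n matrix. For each α > 0, let Q_α : [0, ∞) → M_n(ℝ) be a differentiable function satisfying Q_α(0) = Q₀ and, for every t ≥ 0, Q_α′(t) = −(2/α)(Q_α(t)² − Q_α(t)). Then for every fixed t > 0, Q_α(t) converges to the identity matrix I as α → 0⁺. -/
attribute [local instance] Matrix.frobeniusNormedAddCommGroup Matrix.frobeniusNormedSpace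

attribute [local instance] Matrix.frobeniusNormedRing Matrix.frobeniusNormedAlgebra

open Filter Topology Matrix

section RiccatiAux

variable {n : ℕ}

private lemma posSemidef_smul' {Q : Matrix (Fin n) (Fin n) ℝ} (hQ : Q.PosSemidef) {c : ℝ}
    (hc : 0 ≤ c) : (c • Q).PosSemidef := by
  rw [posSemidef_iff_dotProduct_mulVec]
  constructor
  · show (c • Q)ᴴ = c • Q
    rw [conjTranspose_smul, star_trivial, hQ.1]
  · intro x
    have h := hQ.dotProduct_mulVec_nonneg x
    calc (0:ℝ) ≤ c * (star x ⬝ᵥ Q *ᵥ x) := mul_nonneg hc h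
    _ = star x ⬝ᵥ (c • Q) *ᵥ x := by rw [smul_mulVec, dotProduct_smul, smul_eq_mul]

private lemma posDef_smul' {Q : Matrix (Fin n) (Fin n) ℝ} (hQ : Q.PosDef) {c : ℝ}
    (hc : 0 < c) : (c • Q).PosDef := by
  rw [posDef_iff_dotProduct_mulVec]
  constructor
  · show (c • Q)ᴴ = c • Q
    rw [conjTranspose_smul, star_trivial, hQ.1]
  · intro x hx
    have h := hQ.dotProduct_mulVec_pos hx
    calc (0:ℝ) < c * (star x ⬝ᵥ Q *ᵥ x) := mul_pos hc h
    _ = star x ⬝ᵥ (c • Q) *ᵥ x := by rw [smul_mulVec, dotProduct_smul, smul_eq_mul]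

noncomputable def Pm (Q₀ : Matrix (Fin n) (Fin n) ℝ) (s : ℝ) : Matrix (Fin n) (Fin n) ℝ :=
  Real.exp (-2*s) • (1 : Matrix (Fin n) (Fin n) ℝ) + (1 - Real.exp (-2*s)) • Q₀

private lemma posDef_P {Q₀ : Matrix (Fin n) (Fin n) ℝ} (hQ₀ : Q₀.PosDef) {s : ℝ} (hs : 0 ≤ s) :
    (Pm Q₀ s).PosDef := by
  unfold Pm
  refine (posDef_smul' Matrix.PosDef.one (Real.exp_pos (-2*s))).add_posSemidef
    (posSemidef_smul' hQ₀.posSemidef ?_)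
  have : Real.exp (-2*s) ≤ 1 := Real.exp_le_one_iff.mpr (by nlinarith)
  linarith

private lemma isUnit_of_posDef {A : Matrix (Fin n) (Fin n) ℝ} (hA : A.PosDef) : IsUnit A :=
  (Matrix.isUnit_iff_isUnit_det A).2 (isUnit_iff_ne_zero.mpr hA.det_pos.ne')

noncomputable def Sf (Q₀ : Matrix (Fin n) (Fin n) ℝ) (s : ℝ) : Matrix (Fin n) (Fin n) ℝ :=
  Q₀ * Ring.inverse (Pm Q₀ s)

private lemma hasDerivAt_Pm (Q₀ : Matrix (Fin n) (Fin n) ℝ) (s : ℝ) :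
    HasDerivAt (Pm Q₀) ((-2 * Real.exp (-2*s)) • ((1 : Matrix (Fin n) (Fin n) ℝ) - Q₀)) s := by
  have hexp : HasDerivAt (fun s : ℝ => Real.exp (-2*s)) (-2 * Real.exp (-2*s)) s := by
    simpa [Function.comp_def, mul_comm] using (Real.hasDerivAt_exp (-2*s)).comp s ((hasDerivAt_id s).const_mul (-2))
  have h1 := hexp.smul_const (1 : Matrix (Fin n) (Fin n) ℝ)
  have h2 := ((hexp.const_sub 1)).smul_const Q₀
  refine (h1.add h2).congr_deriv ?_
  symm
  rw [smul_sub]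
  module

private lemma hasDerivAt_Sf {Q₀ : Matrix (Fin n) (Fin n) ℝ} (hQ₀ : Q₀.PosDef) {s : ℝ}
    (hs : 0 ≤ s) : HasDerivAt (Sf Q₀) ((-2 : ℝ) • ((Sf Q₀ s)^2 - Sf Q₀ s)) s := by
  obtain ⟨u, hu⟩ := isUnit_of_posDef (posDef_P hQ₀ hs)
  have hder := (hu ▸ hasFDerivAt_ringInverse (𝕜 := ℝ) u).comp_hasDerivAt s (hasDerivAt_Pm Q₀ s)
  have hmul := hder.const_mul Q₀
  refine hmul.congr_deriv ?_
  symm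
  have hV : Ring.inverse (Pm Q₀ s) = (↑u⁻¹ : Matrix (Fin n) (Fin n) ℝ) := by
    rw [← hu, Ring.inverse_unit]
  set V := (↑u⁻¹ : Matrix (Fin n) (Fin n) ℝ) with hVdef
  have hVP : V * Pm Q₀ s = 1 := by rw [hVdef, ← hu]; exact u.inv_mul
  have hQP : Q₀ - Pm Q₀ s = Real.exp (-2*s) • (Q₀ - 1) := by unfold Pm; module
  have h2 : (Q₀*V)^2 - Q₀*V = Q₀*(V*((Q₀ - Pm Q₀ s)*V)) := by
    rw [sub_mul, mul_sub, mul_sub, ← mul_assoc V (Pm Q₀ s) V, hVP, one_mul, pow_two]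
    noncomm_ring
  show (-2 : ℝ) • ((Q₀ * Ring.inverse (Pm Q₀ s))^2 - Q₀ * Ring.inverse (Pm Q₀ s)) = _
  rw [hV, h2, hQP]
  simp only [ContinuousLinearMap.neg_apply, ContinuousLinearMap.mulLeftRight_apply,
    smul_mul_assoc, mul_smul_comm, smul_smul, mul_sub, sub_mul, mul_one, one_mul, mul_assoc]
  rw [mul_neg, mul_smul_comm, mul_sub]
  module

private lemma Sf_zero {Q₀ : Matrix (Fin n) (Fin n) ℝ} : Sf Q₀ 0 = Q₀ := by
  unfold Sf Pm
  simp

private lemma tendsto_Sf {Q₀ : Matrix (Fin n) (Fin n) ℝ} (hQ₀ : Q₀.PosDef) :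
    Filter.Tendsto (Sf Q₀) Filter.atTop (𝓝 1) := by
  obtain ⟨u, hu⟩ := isUnit_of_posDef hQ₀
  have hexp : Filter.Tendsto (fun s : ℝ => Real.exp (-2*s)) Filter.atTop (𝓝 0) := by
    apply Real.tendsto_exp_atBot.comp
    exact Filter.tendsto_id.const_mul_atTop_of_neg (by norm_num)
  have hP : Filter.Tendsto (fun s => Pm Q₀ s) Filter.atTop (𝓝 (Q₀)) := by
    have h := (hexp.smul_const (1 : Matrix (Fin n) (Fin n) ℝ)).add
      (((tendsto_const_nhds (x := (1:ℝ)) (f := Filter.atTop)).sub hexp).smul_const Q₀)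
    simpa [Pm] using h
  have hP' : Filter.Tendsto (fun s => Pm Q₀ s) Filter.atTop (𝓝 (↑u)) := hu ▸ hP
  have hinv := (NormedRing.inverse_continuousAt u).tendsto.comp hP'
  have hfin := hinv.const_mul Q₀
  rw [Ring.inverse_unit] at hfin
  have huinv : Q₀ * (↑u⁻¹ : Matrix (Fin n) (Fin n) ℝ) = 1 := by rw [← hu]; exact u.mul_inv
  rw [huinv] at hfin
  exact hfin

private lemma lipschitz_field {α R : ℝ} (hα : 0 < α) (hR : 0 ≤ R) :
    LipschitzOnWith (2/α*(2*R+1)).toNNReal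
      (fun x : Matrix (Fin n) (Fin n) ℝ => (-(2/α)) • (x^2 - x)) (Metric.closedBall 0 R) := by
  apply LipschitzOnWith.of_dist_le_mul
  intro x hx y hy
  rw [Metric.mem_closedBall, dist_zero_right] at hx hy
  rw [dist_eq_norm, dist_eq_norm]
  have hkey : (-(2/α)) • (x^2 - x) - (-(2/α)) • (y^2 - y)
      = (-(2/α)) • (x*(x-y) + (x-y)*y - (x-y)) := by
    rw [← smul_sub]
    congr 1
    noncomm_ring
  rw [hkey, norm_smul, Real.norm_eq_abs, abs_neg, abs_of_nonneg (by positivity : (0:ℝ) ≤ 2/α)]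
  have h1 : ‖x*(x-y) + (x-y)*y - (x-y)‖ ≤ (‖x‖ + ‖y‖ + 1) * ‖x-y‖ := by
    calc ‖x*(x-y) + (x-y)*y - (x-y)‖ ≤ ‖x*(x-y) + (x-y)*y‖ + ‖x-y‖ := norm_sub_le _ _
    _ ≤ ‖x*(x-y)‖ + ‖(x-y)*y‖ + ‖x-y‖ := by gcongr; exact norm_add_le _ _
    _ ≤ ‖x‖*‖x-y‖ + ‖x-y‖*‖y‖ + ‖x-y‖ := by gcongr <;> exact norm_mul_le _ _
    _ = (‖x‖ + ‖y‖ + 1) * ‖x-y‖ := by ring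
  have hcoe : ((2/α*(2*R+1)).toNNReal : ℝ) = 2/α*(2*R+1) :=
    Real.coe_toNNReal _ (by positivity)
  rw [hcoe]
  calc 2/α * ‖x*(x-y) + (x-y)*y - (x-y)‖ ≤ 2/α * ((‖x‖ + ‖y‖ + 1) * ‖x-y‖) := by
        apply mul_le_mul_of_nonneg_left h1 (by positivity)
  _ ≤ 2/α * ((2*R+1) * ‖x-y‖) := by
        apply mul_le_mul_of_nonneg_left _ (by positivity)
        apply mul_le_mul_of_nonneg_right _ (norm_nonneg _)
        linarith
  _ = 2/α*(2*R+1) * ‖x-y‖ := by ring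

private lemma eq_Sf {Q₀ : Matrix (Fin n) (Fin n) ℝ} (hQ₀ : Q₀.PosDef)
    (Q : ℝ → Matrix (Fin n) (Fin n) ℝ) {α T : ℝ} (hα : 0 < α) (hT : 0 < T)
    (hinit : Q 0 = Q₀)
    (hdiff : ∀ t ∈ Set.Ici (0:ℝ), HasDerivWithinAt Q (-(2/α) • (Q t^2 - Q t)) (Set.Ici (0:ℝ)) t) :
    Q T = Sf Q₀ (T/α) := by
  set g : ℝ → Matrix (Fin n) (Fin n) ℝ := fun t => Sf Q₀ (t/α) with hg
  have hgderiv : ∀ t, 0 ≤ t → HasDerivAt g (-(2/α) • (g t^2 - g t)) t := by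
    intro t ht
    have h1 : HasDerivAt (fun t : ℝ => t/α) (1/α) t := (hasDerivAt_id t).div_const α
    have h2 := (hasDerivAt_Sf hQ₀ (div_nonneg ht hα.le)).scomp t h1
    refine h2.congr_deriv ?_
    symm
    rw [smul_smul]
    congr 1
    field_simp
  have hQcont : ContinuousOn Q (Set.Icc 0 T) := fun t ht =>
    ((hdiff t ht.1).continuousWithinAt).mono Set.Icc_subset_Ici_self
  have hgcont : ContinuousOn g (Set.Icc 0 T) := fun t ht =>
    ((hgderiv t ht.1).continuousAt).continuousWithinAt
  obtain ⟨C₁, hC₁⟩ := isCompact_Icc.exists_bound_of_continuousOn hQcont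
  obtain ⟨C₂, hC₂⟩ := isCompact_Icc.exists_bound_of_continuousOn hgcont
  set R : ℝ := max C₁ C₂ with hR
  have hR0 : 0 ≤ R :=
    le_trans (norm_nonneg (Q 0)) (le_trans (hC₁ 0 ⟨le_refl _, hT.le⟩) (le_max_left _ _))
  have huniq : Set.EqOn Q g (Set.Icc 0 T) := by
    apply ODE_solution_unique_of_mem_Icc_right
      (v := fun _ x => (-(2/α)) • (x^2 - x)) (s := fun _ => Metric.closedBall 0 R)
      (fun _ _ => lipschitz_field hα hR0) hQcont ?_ ?_ hgcont ?_ ?_ ?_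
    · intro t ht
      exact (hdiff t ht.1).mono (Set.Ici_subset_Ici.mpr ht.1)
    · intro t ht
      exact mem_closedBall_zero_iff.2
        (le_trans (hC₁ t (Set.Ico_subset_Icc_self ht)) (le_max_left _ _))
    · intro t ht
      exact ((hgderiv t ht.1).hasDerivWithinAt)
    · intro t ht
      exact mem_closedBall_zero_iff.2
        (le_trans (hC₂ t (Set.Ico_subset_Icc_self ht)) (le_max_right _ _))
    · rw [hinit, hg]
      simp only [zero_div]
      rw [Sf_zero]
  have := huniq (Set.right_mem_Icc.mpr hT.le)
  simpa using this


end RiccatiAux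


/-- Relaxation limit for the matrix Riccati-type ODE `Q' = -(2/α)(Q² - Q)` with symmetric
positive definite initial datum `Q₀`: for every fixed `t > 0`, `Q_α(t) → I` as `α → 0⁺`. -/
theorem riccati_relaxation_limit
    {n : ℕ} (hn : 1 ≤ n) (Q₀ : Matrix (Fin n) (Fin n) ℝ) (hQ₀ : Q₀.PosDef)
    (Q : ℝ → ℝ → Matrix (Fin n) (Fin n) ℝ)
    (hinit : ∀ α > (0 : ℝ), Q α 0 = Q₀)
    (hdiff : ∀ α > (0 : ℝ), ∀ t ∈ Set.Ici (0 : ℝ),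
      HasDerivWithinAt (Q α)
        (-(2 / α) • (Q α t ^ 2 - Q α t)) (Set.Ici (0 : ℝ)) t) :
    ∀ t > (0 : ℝ), Tendsto (fun α => Q α t) (𝓝[>] (0 : ℝ)) (𝓝 1) := by
  intro t ht
  have htdiv : Tendsto (fun α : ℝ => t / α) (𝓝[>] (0:ℝ)) atTop := by
    simpa [div_eq_mul_inv] using Tendsto.const_mul_atTop ht tendsto_inv_nhdsGT_zero
  have h1 : Tendsto (fun α : ℝ => Sf Q₀ (t/α)) (𝓝[>] (0:ℝ)) (𝓝 1) :=
    (tendsto_Sf hQ₀).comp htdiv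
  have heq : (fun α : ℝ => Sf Q₀ (t/α)) =ᶠ[𝓝[>] (0:ℝ)] (fun α => Q α t) := by
    filter_upwards [self_mem_nhdsWithin] with α hα
    exact (eq_Sf hQ₀ (Q α) hα ht (hinit α hα) (hdiff α hα)).symm
  exact h1.congr' heq
end

section
/- Let n ≥ 1, let Θ : ℝⁿ → M_n(ℝ) be differentiable, and let R be a constant real n×n matrix with RRᵀ = I. Define Θ′ : ℝⁿ → M_n(ℝ) by Θ′(x) = Θ(x)Rᵀ, so that Θ(x) = Θ′(x)R. Then for every x, Θ(x)(∇·Θ)(x) = Θ′(x)(∇·Θ′)(x), where for a matrix field A the divergence ∇·A is the vector field with components (∇·A)_j = Σ_{i=1}^n ∂_{x_i} A_{ij}. -/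
open Matrix

/-- Divergence of a matrix field: `(∇·A)_j = Σ_i ∂_{x_i} A_{ij}`. -/
noncomputable def matDiv {n : ℕ} (A : (Fin n → ℝ) → Matrix (Fin n) (Fin n) ℝ)
    (x : Fin n → ℝ) : Fin n → ℝ :=
  fun j => ∑ i, fderiv ℝ (fun y => A y i j) x (Pi.single i 1)

/-- Invariance of the term `Θ ∇·Θ` of the SOHB model under a change of the reference frame:
if `R` is orthogonal and `Θ'(x) = Θ(x)Rᵀ` (so that `Θ = Θ'R`), then
`Θ(x) (∇·Θ)(x) = Θ'(x) (∇·Θ')(x)` for every `x`. -/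
theorem theta_div_theta_frame_invariant
    {n : ℕ} (hn : 1 ≤ n)
    (Θ Θ' : (Fin n → ℝ) → Matrix (Fin n) (Fin n) ℝ)
    (hΘ : ∀ i j, Differentiable ℝ fun x => Θ x i j)
    (R : Matrix (Fin n) (Fin n) ℝ) (hR : R * Rᵀ = 1)
    (hΘ' : ∀ x, Θ' x = Θ x * Rᵀ) :
    ∀ x : Fin n → ℝ, Θ x *ᵥ matDiv Θ x = Θ' x *ᵥ matDiv Θ' x := by
  intro x
  have hRt : Rᵀ * R = 1 := mul_eq_one_comm.mp hR
  have hdiv : matDiv Θ' x = R *ᵥ matDiv Θ x := by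
    funext j
    have hfun : ∀ i : Fin n, (fun y => Θ' y i j) = fun y => ∑ k, R j k * Θ y i k := by
      intro i; funext y
      simp [hΘ', Matrix.mul_apply, Matrix.transpose_apply, mul_comm]
    simp only [matDiv, hfun]
    have hD : ∀ i : Fin n,
        fderiv ℝ (fun y => ∑ k, R j k * Θ y i k) x (Pi.single i 1)
          = ∑ k, R j k * fderiv ℝ (fun y => Θ y i k) x (Pi.single i 1) := by
      intro i
      rw [fderiv_fun_sum (fun k _ => ((hΘ i k).const_mul (R j k)).differentiableAt)]
      simp only [ContinuousLinearMap.sum_apply]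
      refine Finset.sum_congr rfl fun k _ => ?_
      rw [fderiv_const_mul ((hΘ i k).differentiableAt)]
      simp
    simp only [hD, Matrix.mulVec, dotProduct, matDiv]
    rw [Finset.sum_comm]
    simp [Finset.mul_sum]
  rw [hdiv, hΘ' x, Matrix.mulVec_mulVec, Matrix.mul_assoc, hRt, Matrix.mul_one]
end

section
/- Let n ≥ 1, let μ be the Haar probability measure on the special orthogonal group SO_n(ℝ) (a compact topological group of real n×n matrices), let κ ∈ ℝ, and let Θ ∈ SO_n(ℝ). Then ∫_{SO_n(ℝ)} exp(κ Tr(ΘᵀA)) (AΘᵀ − ΘAᵀ) dμ(A) = 0 (the zero n×n matrix). -/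
attribute [local instance] Matrix.frobeniusNormedAddCommGroup Matrix.frobeniusNormedSpace

noncomputable instance matrixBorelMeasurableSpace {n : ℕ} :
    MeasurableSpace (Matrix (Fin n) (Fin n) ℝ) := borel _

instance matrixBorelSpace {n : ℕ} :
    BorelSpace (Matrix (Fin n) (Fin n) ℝ) := ⟨rfl⟩

open Matrix MeasureTheory

section aux
variable {n : ℕ}

lemma cont_lmul (Θ : Matrix (Fin n) (Fin n) ℝ) :
    Continuous (fun A : Matrix (Fin n) (Fin n) ℝ => Θ * A) :=
  (LinearMap.mulLeft ℝ Θ).continuous_of_finiteDimensional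

lemma cont_rmul (Θ : Matrix (Fin n) (Fin n) ℝ) :
    Continuous (fun A : Matrix (Fin n) (Fin n) ℝ => A * Θ) :=
  (LinearMap.mulRight ℝ Θ).continuous_of_finiteDimensional

lemma cont_transpose :
    Continuous (fun A : Matrix (Fin n) (Fin n) ℝ => Aᵀ) :=
  (Matrix.transposeLinearEquiv (Fin n) (Fin n) ℝ ℝ).toLinearMap.continuous_of_finiteDimensional

lemma cont_trace (Θ : Matrix (Fin n) (Fin n) ℝ) :
    Continuous (fun A : Matrix (Fin n) (Fin n) ℝ => trace (Θ * A)) :=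
  ((Matrix.traceLinearMap (Fin n) ℝ ℝ).comp (LinearMap.mulLeft ℝ Θ)).continuous_of_finiteDimensional

end aux

/-- If `μ` is the Haar probability measure of `SO_n(ℝ)` (a probability measure carried by
`SO_n(ℝ)`, invariant under left and right translations by rotations and under transposition,
i.e. under the group inverse), then for any `κ ∈ ℝ` and `Θ ∈ SO_n(ℝ)`,
`∫ exp(κ Tr(ΘᵀA)) (AΘᵀ − ΘAᵀ) dμ(A) = 0`. -/
theorem vonMises_projection_integral_zero
    {n : ℕ} (hn : 1 ≤ n) (κ : ℝ)
    (μ : Measure (Matrix (Fin n) (Fin n) ℝ)) [IsProbabilityMeasure μ]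
    (hsupp : ∀ᵐ A ∂μ, A * Aᵀ = 1 ∧ A.det = 1)
    (hleft : ∀ R : Matrix (Fin n) (Fin n) ℝ, R * Rᵀ = 1 → R.det = 1 →
      Measure.map (fun A => R * A) μ = μ)
    (hright : ∀ R : Matrix (Fin n) (Fin n) ℝ, R * Rᵀ = 1 → R.det = 1 →
      Measure.map (fun A => A * R) μ = μ)
    (hinv : Measure.map (fun A : Matrix (Fin n) (Fin n) ℝ => Aᵀ) μ = μ)
    (Θ : Matrix (Fin n) (Fin n) ℝ) (hΘ : Θ * Θᵀ = 1) (hΘdet : Θ.det = 1) :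
    ∫ A, Real.exp (κ * trace (Θᵀ * A)) • (A * Θᵀ - Θ * Aᵀ) ∂μ = 0 := by
  have hΘ' : Θᵀ * Θ = 1 := mul_eq_one_comm.mp hΘ
  set f : Matrix (Fin n) (Fin n) ℝ → Matrix (Fin n) (Fin n) ℝ :=
    fun A => Real.exp (κ * trace (Θᵀ * A)) • (A * Θᵀ - Θ * Aᵀ) with hf
  have hfc : Continuous f := by
    refine Continuous.smul (f := fun A => Real.exp (κ * trace (Θᵀ * A))) (g := fun A => A * Θᵀ - Θ * Aᵀ) ?_ ?_
    · exact (Real.continuous_exp.comp ((continuous_const.mul (cont_trace Θᵀ))))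
    · exact (cont_rmul Θᵀ).sub ((cont_lmul Θ).comp cont_transpose)
  -- the map T
  have hcomp : (fun A : Matrix (Fin n) (Fin n) ℝ => Θ * Aᵀ * Θ)
      = (fun A => A * Θ) ∘ (fun A => Θ * A) ∘ (fun A => Aᵀ) := rfl
  have hT : Measure.map (fun A : Matrix (Fin n) (Fin n) ℝ => Θ * Aᵀ * Θ) μ = μ := by
    rw [hcomp, ← Function.comp_assoc,
      ← Measure.map_map ((cont_rmul Θ).comp (cont_lmul Θ)).measurable cont_transpose.measurable,
      hinv, ← Measure.map_map (cont_rmul Θ).measurable (cont_lmul Θ).measurable,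
      hleft Θ hΘ hΘdet, hright Θ hΘ hΘdet]
  have key : ∀ A : Matrix (Fin n) (Fin n) ℝ, f (Θ * Aᵀ * Θ) = - f A := by
    intro A
    have htr : trace (Θᵀ * (Θ * Aᵀ * Θ)) = trace (Θᵀ * A) := by
      have : Θᵀ * (Θ * Aᵀ * Θ) = Aᵀ * Θ := by
        rw [← Matrix.mul_assoc, ← Matrix.mul_assoc, hΘ', Matrix.one_mul]
      rw [this, ← Matrix.trace_transpose (Θᵀ * A), Matrix.transpose_mul,
        Matrix.transpose_transpose]
    have hm : Θ * Aᵀ * Θ * Θᵀ - Θ * (Θ * Aᵀ * Θ)ᵀ = -(A * Θᵀ - Θ * Aᵀ) := by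
      rw [Matrix.mul_assoc (Θ * Aᵀ) Θ Θᵀ, hΘ, Matrix.mul_one,
        Matrix.transpose_mul, Matrix.transpose_mul, Matrix.transpose_transpose,
        ← Matrix.mul_assoc, ← Matrix.mul_assoc, hΘ, Matrix.one_mul]
      abel
    simp only [hf, htr, hm, smul_neg]
  have hcalc : ∫ A, f A ∂μ = - ∫ A, f A ∂μ := calc ∫ A, f A ∂μ = ∫ A, f A ∂(Measure.map (fun A => Θ * Aᵀ * Θ) μ) := by rw [hT]
    _ = ∫ A, f (Θ * Aᵀ * Θ) ∂μ := by
        rw [integral_map]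
        · exact (((cont_rmul Θ).comp (cont_lmul Θ)).comp cont_transpose).aemeasurable
        · exact (by have : TopologicalSpace.PseudoMetrizableSpace (Matrix (Fin n) (Fin n) ℝ) := inferInstanceAs (TopologicalSpace.PseudoMetrizableSpace (Fin n → Fin n → ℝ)); have : SecondCountableTopology (Matrix (Fin n) (Fin n) ℝ) := inferInstanceAs (SecondCountableTopology (Fin n → Fin n → ℝ)); exact hfc.aestronglyMeasurable)
    _ = ∫ A, - f A ∂μ := by simp_rw [key]
    _ = - ∫ A, f A ∂μ := integral_neg _
  have h2 : (2 : ℝ) • (∫ A, f A ∂μ) = 0 := by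
    rw [two_smul]
    nth_rewrite 2 [hcalc]
    exact add_neg_cancel _
  exact (smul_eq_zero.mp h2).resolve_left (by norm_num)
end

section
/- Let n ≥ 1, let Θ be a real n×n matrix with ΘΘᵀ = I, let λ > 0, and let J₁ ∈ M_n(ℝ). For J ∈ M_n(ℝ) with JJᵀ positive definite, let 𝒫(J) = ((JJᵀ)^{1/2})⁻¹ J, where (JJᵀ)^{1/2} is the unique symmetric positive definite square root of JJᵀ. Then there is a neighborhood of 0 in ℝ on which (λΘ + δJ₁)(λΘ + δJ₁)ᵀ is positive definite, and the map δ ↦ 𝒫(λΘ + δJ₁) is differentiable at δ = 0 with derivative (1/λ) ((J₁Θᵀ − ΘJ₁ᵀ)/2) Θ. -/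
attribute [local instance] Matrix.frobeniusNormedAddCommGroup Matrix.frobeniusNormedSpace

open Matrix

/-- Scalar multiplication by a nonzero real as a continuous linear equivalence. -/
noncomputable def smulCLE {E : Type*} [NormedAddCommGroup E] [NormedSpace ℝ E]
    (c : ℝ) (hc : c ≠ 0) : E ≃L[ℝ] E :=
  { toFun := fun x => c • x
    invFun := fun x => c⁻¹ • x
    map_add' := fun x y => smul_add c x y
    map_smul' := fun t x => smul_comm c t x
    left_inv := fun x => by simp [smul_smul, inv_mul_cancel₀ hc]
    right_inv := fun x => by simp [smul_smul, mul_inv_cancel₀ hc]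
    continuous_toFun := continuous_const_smul c
    continuous_invFun := continuous_const_smul c⁻¹ }

@[simp] lemma smulCLE_apply {E : Type*} [NormedAddCommGroup E] [NormedSpace ℝ E]
    (c : ℝ) (hc : c ≠ 0) (x : E) : smulCLE c hc x = c • x := rfl

@[simp] lemma smulCLE_symm_apply {E : Type*} [NormedAddCommGroup E] [NormedSpace ℝ E]
    (c : ℝ) (hc : c ≠ 0) (x : E) : (smulCLE c hc).symm x = c⁻¹ • x := rfl

/-- If `A` is invertible, then `A Aᵀ` is positive definite (real entries). -/
lemma mulTranspose_posDef {n : ℕ} (A : Matrix (Fin n) (Fin n) ℝ) (hA : IsUnit A.det) :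
    (A * Aᵀ).PosDef := by
  rw [posDef_iff_dotProduct_mulVec]
  constructor
  · show (A * Aᵀ)ᴴ = _
    rw [conjTranspose_eq_transpose_of_trivial, transpose_mul, transpose_transpose]
  · intro x hx
    simp only [star_trivial]
    have h1 : (A * Aᵀ) *ᵥ x = A *ᵥ (Aᵀ *ᵥ x) := (mulVec_mulVec x A Aᵀ).symm
    rw [h1, dotProduct_mulVec, ← mulVec_transpose]
    set v := Aᵀ *ᵥ x with hv_def
    have hv : v ≠ 0 := by
      intro h0
      apply hx
      have hdet : IsUnit Aᵀ.det := by rwa [det_transpose]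
      have hinj := Matrix.mulVec_injective_iff_isUnit.mpr ((Matrix.isUnit_iff_isUnit_det Aᵀ).mpr hdet)
      have : Aᵀ *ᵥ x = Aᵀ *ᵥ 0 := by simpa [Matrix.mulVec_zero] using h0
      exact hinj this
    have h2 : 0 ≤ v ⬝ᵥ v := Finset.sum_nonneg fun i _ => mul_self_nonneg _
    refine lt_of_le_of_ne h2 fun h => hv ?_
    exact dotProduct_self_eq_zero.mp h.symm

/-- A real symmetric matrix close to `lam • 1` (Frobenius norm) with `lam > 0`
is positive definite. -/
lemma posDef_of_norm_lt {n : ℕ} {lam : ℝ} (hlam : 0 < lam) (S : Matrix (Fin n) (Fin n) ℝ)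
    (hsym : Sᵀ = S) (hnorm : ‖S - lam • (1 : Matrix (Fin n) (Fin n) ℝ)‖ < lam) : S.PosDef := by
  rw [posDef_iff_dotProduct_mulVec]
  constructor
  · show Sᴴ = S
    rw [conjTranspose_eq_transpose_of_trivial, hsym]
  · intro x hx
    simp only [star_trivial]
    set A := S - lam • (1 : Matrix (Fin n) (Fin n) ℝ) with hA_def
    have hSx : S *ᵥ x = lam • x + A *ᵥ x := by
      have : S = lam • (1 : Matrix (Fin n) (Fin n) ℝ) + A := by simp [hA_def]
      rw [this, add_mulVec, smul_mulVec, one_mulVec]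
    rw [hSx, dotProduct_add, dotProduct_smul]
    set t := x ⬝ᵥ x with ht_def
    set Q := x ⬝ᵥ (A *ᵥ x) with hQ_def
    have ht : 0 < t := by
      refine lt_of_le_of_ne (Finset.sum_nonneg fun i _ => mul_self_nonneg _) fun h => hx ?_
      exact dotProduct_self_eq_zero.mp h.symm
    have htsq : t = ∑ i, x i ^ 2 := by
      simp [ht_def, dotProduct, sq]
    have hnormA_sq : ‖A‖ ^ 2 = ∑ i, ∑ j, A i j ^ 2 := by
      have h1 : ‖A‖ = Real.sqrt (∑ i, ∑ j, A i j ^ 2) := by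
        rw [frobenius_norm_def, Real.sqrt_eq_rpow]
        congr 1
        refine Finset.sum_congr rfl fun i _ => Finset.sum_congr rfl fun j _ => ?_
        rw [Real.rpow_two, Real.norm_eq_abs, sq_abs]
      rw [h1, Real.sq_sqrt]
      exact Finset.sum_nonneg fun i _ => Finset.sum_nonneg fun j _ => sq_nonneg _
    have hQsq : Q ^ 2 ≤ ‖A‖ ^ 2 * t ^ 2 := by
      have step1 : Q ^ 2 ≤ t * ∑ i, (A *ᵥ x) i ^ 2 := by
        have := Finset.sum_mul_sq_le_sq_mul_sq Finset.univ x (A *ᵥ x)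
        rw [htsq]
        simpa [hQ_def, dotProduct] using this
      have step2 : ∀ i, (A *ᵥ x) i ^ 2 ≤ (∑ j, A i j ^ 2) * t := by
        intro i
        have := Finset.sum_mul_sq_le_sq_mul_sq Finset.univ (fun j => A i j) x
        rw [htsq]
        simpa [Matrix.mulVec, dotProduct] using this
      have step3 : t * ∑ i, (A *ᵥ x) i ^ 2 ≤ t * ((∑ i, ∑ j, A i j ^ 2) * t) := by
        apply mul_le_mul_of_nonneg_left _ ht.le
        rw [Finset.sum_mul]
        exact Finset.sum_le_sum fun i _ => step2 i
      calc Q ^ 2 ≤ t * ∑ i, (A *ᵥ x) i ^ 2 := step1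
        _ ≤ t * ((∑ i, ∑ j, A i j ^ 2) * t) := step3
        _ = ‖A‖ ^ 2 * t ^ 2 := by rw [hnormA_sq]; ring
    have hAt : ‖A‖ * t < lam * t := mul_lt_mul_of_pos_right hnorm ht
    have hAnn : 0 ≤ ‖A‖ * t := mul_nonneg (norm_nonneg A) ht.le
    simp only [smul_eq_mul]
    nlinarith [sq_nonneg (Q + ‖A‖ * t), sq_nonneg (Q - ‖A‖ * t)]

/-- Differential of the polar factor map `𝒫(J) = ((JJᵀ)^{1/2})⁻¹ J` at a scaled orthogonal
matrix `λΘ`: for `λ > 0` and `ΘΘᵀ = I`, the matrices `(λΘ + δJ₁)(λΘ + δJ₁)ᵀ` are positive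
definite for `δ` in a neighborhood of `0`, and `δ ↦ 𝒫(λΘ + δJ₁)` is differentiable at `δ = 0`
with derivative `(1/λ)((J₁Θᵀ − ΘJ₁ᵀ)/2)Θ`.  Here `𝒫` is encoded by the property that
`𝒫(J) = S⁻¹J` whenever `S` is the symmetric positive definite square root of `JJᵀ`. -/
theorem polar_factor_differential
    {n : ℕ} (hn : 1 ≤ n)
    (Θ : Matrix (Fin n) (Fin n) ℝ) (hΘ : Θ * Θᵀ = 1)
    (lam : ℝ) (hlam : 0 < lam) (J₁ : Matrix (Fin n) (Fin n) ℝ)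
    (P : Matrix (Fin n) (Fin n) ℝ → Matrix (Fin n) (Fin n) ℝ)
    (hP : ∀ J S : Matrix (Fin n) (Fin n) ℝ, S.PosDef → S * S = J * Jᵀ → P J = S⁻¹ * J) :
    (∃ ε > (0 : ℝ), ∀ δ : ℝ, |δ| < ε →
      ((lam • Θ + δ • J₁) * (lam • Θ + δ • J₁)ᵀ).PosDef) ∧
    HasDerivAt (fun δ : ℝ => P (lam • Θ + δ • J₁))
      ((1 / lam) • (((1 / 2 : ℝ) • (J₁ * Θᵀ - Θ * J₁ᵀ)) * Θ)) 0 := by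
  classical
  letI : NormedRing (Matrix (Fin n) (Fin n) ℝ) := Matrix.frobeniusNormedRing
  letI : NormedAlgebra ℝ (Matrix (Fin n) (Fin n) ℝ) := Matrix.frobeniusNormedAlgebra
  have hlam' : lam ≠ 0 := hlam.ne'
  have h2lam : (2 * lam) ≠ 0 := by positivity
  set a₀ : Matrix (Fin n) (Fin n) ℝ := lam • (1 : Matrix (Fin n) (Fin n) ℝ) with ha₀
  -- the squaring map and its strict derivative at a₀
  have hg : HasStrictFDerivAt (fun S : Matrix (Fin n) (Fin n) ℝ => S * S)
      ((smulCLE (2 * lam) h2lam :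
        Matrix (Fin n) (Fin n) ℝ ≃L[ℝ] Matrix (Fin n) (Fin n) ℝ).toContinuousLinearMap :
        Matrix (Fin n) (Fin n) ℝ →L[ℝ] Matrix (Fin n) (Fin n) ℝ) a₀ := by
    have h := (hasStrictFDerivAt_id (𝕜 := ℝ) a₀).mul' (hasStrictFDerivAt_id a₀)
    convert h using 1
    all_goals try rfl
    refine ContinuousLinearMap.ext fun H => ?_
    show (2 * lam) • H = _
    simp only [ContinuousLinearMap.add_apply, ContinuousLinearMap.smul_apply,
      ContinuousLinearMap.coe_id', id_eq, ContinuousLinearMap.smulRight_apply, smul_eq_mul,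
      ha₀, Matrix.smul_mul, Matrix.mul_smul, one_mul, mul_one]
    rw [two_mul, add_smul]
    show _ = (lam • (1 : Matrix (Fin n) (Fin n) ℝ)) * H + H * (lam • (1 : Matrix (Fin n) (Fin n) ℝ))
    simp only [Matrix.smul_mul, Matrix.mul_smul, Matrix.one_mul, Matrix.mul_one]
  set finv := hg.localInverse (fun S => S * S) _ a₀ with hfinv_def
  have hleft : ∀ᶠ x in nhds a₀, finv (x * x) = x := hg.eventually_left_inverse
  have hright : ∀ᶠ y in nhds (a₀ * a₀), (finv y) * (finv y) = y := hg.eventually_right_inverse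
  have hfix : finv (a₀ * a₀) = a₀ := hg.localInverse_apply_image
  have hinv : HasStrictFDerivAt finv
      (((smulCLE (2 * lam) h2lam :
        Matrix (Fin n) (Fin n) ℝ ≃L[ℝ] Matrix (Fin n) (Fin n) ℝ).symm.toContinuousLinearMap :
        Matrix (Fin n) (Fin n) ℝ →L[ℝ] Matrix (Fin n) (Fin n) ℝ)) (a₀ * a₀) :=
    hg.to_localInverse
  -- the curve J(δ) and M(δ) = J(δ)J(δ)ᵀ
  set Jf : ℝ → Matrix (Fin n) (Fin n) ℝ := fun δ => lam • Θ + δ • J₁ with hJf_def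
  set F : ℝ → Matrix (Fin n) (Fin n) ℝ := fun δ => Jf δ * (Jf δ)ᵀ with hF_def
  have h1 : HasDerivAt Jf J₁ 0 := by
    convert ((hasDerivAt_id (0 : ℝ)).smul_const J₁).const_add (lam • Θ) using 1
    all_goals try rfl
    exact (one_smul ℝ J₁).symm
  have h2 : HasDerivAt (fun δ : ℝ => (Jf δ)ᵀ) J₁ᵀ 0 := by
    have he : (fun δ : ℝ => (Jf δ)ᵀ) = fun δ : ℝ => lam • Θᵀ + δ • J₁ᵀ := by
      funext δ; simp [hJf_def, transpose_add, transpose_smul]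
    rw [he]
    convert ((hasDerivAt_id (0 : ℝ)).smul_const J₁ᵀ).const_add (lam • Θᵀ) using 1
    all_goals try rfl
    exact (one_smul ℝ J₁ᵀ).symm
  have hM : HasDerivAt F (lam • (J₁ * Θᵀ + Θ * J₁ᵀ)) 0 := by
    have := h1.mul h2
    convert this using 1
    all_goals try rfl
    simp [hJf_def, smul_add, Matrix.mul_smul, Matrix.smul_mul, transpose_smul]
  have hF0 : F 0 = a₀ * a₀ := by
    simp [hF_def, hJf_def, ha₀, Matrix.smul_mul, Matrix.mul_smul, transpose_smul, hΘ, smul_smul]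
  set Sf : ℝ → Matrix (Fin n) (Fin n) ℝ := fun δ => finv (F δ) with hSf_def
  have hS : HasDerivAt Sf ((1 / 2 : ℝ) • (J₁ * Θᵀ + Θ * J₁ᵀ)) 0 := by
    rw [← hF0] at hinv
    have := hinv.hasFDerivAt.comp_hasDerivAt 0 hM
    convert this using 1
    show _ = (smulCLE (2 * lam) h2lam).symm (lam • (J₁ * Θᵀ + Θ * J₁ᵀ))
    rw [smulCLE_symm_apply, smul_smul]
    congr 1
    field_simp
    all_goals rfl
  have hS0 : Sf 0 = a₀ := by rw [hSf_def]; show finv (F 0) = a₀; rw [hF0, hfix]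
  have hScont : Filter.Tendsto Sf (nhds 0) (nhds a₀) := by
    have := hS.continuousAt.tendsto
    rwa [hS0] at this
  -- eventually: Sf δ * Sf δ = F δ
  have E1 : ∀ᶠ δ in nhds (0 : ℝ), Sf δ * Sf δ = F δ := by
    have hFtendsto : Filter.Tendsto F (nhds 0) (nhds (a₀ * a₀)) := by
      have := hM.continuousAt.tendsto
      rwa [hF0] at this
    exact hFtendsto.eventually hright
  -- eventually: Sf δ is symmetric
  have E3 : ∀ᶠ δ in nhds (0 : ℝ), (Sf δ)ᵀ = Sf δ := by
    have hTtendsto : Filter.Tendsto (fun δ => (Sf δ)ᵀ) (nhds 0) (nhds a₀) := by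
      have hct : Continuous fun X : Matrix (Fin n) (Fin n) ℝ => Xᵀ :=
        Continuous.matrix_transpose continuous_id
      have := (hct.tendsto a₀).comp hScont
      simp only [ha₀, transpose_smul, transpose_one] at this
      exact this
    have hE := hTtendsto.eventually hleft
    filter_upwards [hE, E1] with δ h₁ h₂
    have hFsym : (F δ)ᵀ = F δ := by
      rw [hF_def]; simp [transpose_mul, transpose_transpose]
    have : (Sf δ)ᵀ * (Sf δ)ᵀ = F δ := by
      rw [← transpose_mul, h₂, hFsym]
    rw [this] at h₁
    rw [← h₁]
  -- eventually : Sf δ is close to a₀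
  have E4 : ∀ᶠ δ in nhds (0 : ℝ), ‖Sf δ - a₀‖ < lam := by
    have hball : ∀ᶠ X : Matrix (Fin n) (Fin n) ℝ in nhds a₀, ‖X - a₀‖ < lam := by
      have := Metric.ball_mem_nhds a₀ hlam
      rw [Filter.eventually_iff]
      exact this
    exact hScont.eventually hball
  have E5 : ∀ᶠ δ in nhds (0 : ℝ), (Sf δ).PosDef := by
    filter_upwards [E3, E4] with δ h₃ h₄
    exact posDef_of_norm_lt hlam (Sf δ) h₃ h₄
  have E6 : ∀ᶠ δ in nhds (0 : ℝ), (F δ).PosDef := by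
    filter_upwards [E1, E3, E5] with δ h₁ h₃ h₅
    have : F δ = Sf δ * (Sf δ)ᵀ := by rw [h₃, h₁]
    rw [this]
    exact mulTranspose_posDef (Sf δ) h₅.det_pos.ne'.isUnit
  constructor
  · rw [Metric.eventually_nhds_iff] at E6
    obtain ⟨ε, hε, h⟩ := E6
    exact ⟨ε, hε, fun δ hδ => h (by simpa [Real.dist_eq] using hδ)⟩
  · -- the derivative statement
    have E7 : ∀ᶠ δ in nhds (0 : ℝ), P (Jf δ) = (Sf δ)⁻¹ * Jf δ := by
      filter_upwards [E1, E5] with δ h₁ h₅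
      exact hP (Jf δ) (Sf δ) h₅ h₁
    -- inverse of Sf
    set u : (Matrix (Fin n) (Fin n) ℝ)ˣ :=
      ⟨a₀, lam⁻¹ • 1, by simp [ha₀, Matrix.smul_mul, Matrix.mul_smul, smul_smul,
          mul_inv_cancel₀ hlam', inv_mul_cancel₀ hlam'], by simp [ha₀, Matrix.smul_mul,
          Matrix.mul_smul, smul_smul, mul_inv_cancel₀ hlam', inv_mul_cancel₀ hlam']⟩ with hu_def
    have hru : HasFDerivAt (Ring.inverse : Matrix (Fin n) (Fin n) ℝ → Matrix (Fin n) (Fin n) ℝ)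
        (-ContinuousLinearMap.mulLeftRight ℝ _ ↑u⁻¹ ↑u⁻¹) (Sf 0) := by
      rw [hS0]
      exact hasFDerivAt_ringInverse u
    have hRinv : HasDerivAt (fun δ => Ring.inverse (Sf δ))
        (-((lam⁻¹ • (1 : Matrix (Fin n) (Fin n) ℝ)) * ((1 / 2 : ℝ) • (J₁ * Θᵀ + Θ * J₁ᵀ)) *
          (lam⁻¹ • (1 : Matrix (Fin n) (Fin n) ℝ)))) 0 := by
      have := hru.comp_hasDerivAt 0 hS
      convert this using 1
      all_goals rfl
    have hInvEq : (fun δ => (Sf δ)⁻¹) = fun δ => Ring.inverse (Sf δ) := by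
      funext δ; exact Matrix.nonsing_inv_eq_ringInverse (Sf δ)
    have hRinv' : HasDerivAt (fun δ => (Sf δ)⁻¹)
        (-((lam⁻¹ • (1 : Matrix (Fin n) (Fin n) ℝ)) * ((1 / 2 : ℝ) • (J₁ * Θᵀ + Θ * J₁ᵀ)) *
          (lam⁻¹ • (1 : Matrix (Fin n) (Fin n) ℝ)))) 0 := by
      rw [hInvEq]; exact hRinv
    have hprod := hRinv'.mul h1
    have hSf0inv : (Sf 0)⁻¹ = lam⁻¹ • (1 : Matrix (Fin n) (Fin n) ℝ) := by
      rw [hS0, Matrix.nonsing_inv_eq_ringInverse]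
      have : Ring.inverse (a₀ : Matrix (Fin n) (Fin n) ℝ) = ↑u⁻¹ := Ring.inverse_unit u
      rw [this]
      rfl
    rw [hSf0inv] at hprod
    have hΘ' : Θᵀ * Θ = 1 := mul_eq_one_comm.mp hΘ
    have hJ₁ΘΘ : J₁ * Θᵀ * Θ = J₁ := by rw [Matrix.mul_assoc, hΘ', Matrix.mul_one]
    -- identify the derivative value
    have hderiv_eq :
        -((lam⁻¹ • (1 : Matrix (Fin n) (Fin n) ℝ)) * ((1 / 2 : ℝ) • (J₁ * Θᵀ + Θ * J₁ᵀ)) *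
          (lam⁻¹ • (1 : Matrix (Fin n) (Fin n) ℝ))) * Jf 0 +
        (lam⁻¹ • (1 : Matrix (Fin n) (Fin n) ℝ)) * J₁ =
        (1 / lam) • (((1 / 2 : ℝ) • (J₁ * Θᵀ - Θ * J₁ᵀ)) * Θ) := by
      have hJf0 : Jf 0 = lam • Θ := by simp [hJf_def]
      rw [hJf0]
      simp only [Matrix.smul_mul, Matrix.mul_smul, Matrix.one_mul, Matrix.mul_one,
        smul_smul, Matrix.neg_mul, Matrix.add_mul, Matrix.sub_mul, smul_add, smul_sub,
        Matrix.mul_assoc, hΘ', Matrix.mul_one]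
      match_scalars <;> (field_simp; try ring)
    rw [hderiv_eq] at hprod
    exact hprod.congr_of_eventuallyEq E7
end
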